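/- arXiv:2109.06962 — 2 statements merged into one kernel-verified Lean document; each statement's English description precedes it below -/
import Mathlib

section
/- Let K ⊆ ℝ³ be a body of constant width one. Then its circumradius satisfies R(K) ≤ √(3/8) and its inradius satisfies r(K) ≥ 1 − √(3/8). -/
/-!
Jung's theorem bounds the circumradius. By Helly's theorem it suffices to enclose any four points
of `K`, which lie pairwise at distance at most one. The centre `c` of their smallest enclosing ball,
of radius `R`, is a convex combination `∑ wᵢ xᵢ` of the points on its boundary sphere, and the
variance identity `∑ᵢⱼ wᵢ wⱼ ‖xᵢ - xⱼ‖² = 2 ∑ᵢ wᵢ ‖xᵢ - c‖² = 2 R²` gives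
`2 R² ≤ 1 - ∑ᵢ wᵢ² ≤ 1 - 1/4`.

Constant width then yields the inscribed ball: if `K ⊆ closedBall a R`, the concentric ball of
radius `1 - R` lies in `K`.
-/

open MeasureTheory Metric Filter
open scoped RealInnerProductSpace

noncomputable section

/-- The support function of a set `K ⊆ ℝ³`. -/
def suppFn (K : Set (EuclideanSpace ℝ (Fin 3))) (u : EuclideanSpace ℝ (Fin 3)) : ℝ :=
  sSup ((fun x => ⟪x, u⟫) '' K)

/-- A body of constant width one in `ℝ³`: a nonempty compact convex set whose support
function satisfies `H(u) + H(-u) = ‖u‖` for all `u`. -/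
def IsBodyOfConstantWidthOne (K : Set (EuclideanSpace ℝ (Fin 3))) : Prop :=
  K.Nonempty ∧ IsCompact K ∧ Convex ℝ K ∧
    ∀ u : EuclideanSpace ℝ (Fin 3), suppFn K u + suppFn K (-u) = ‖u‖

/-- The inradius of `K ⊆ ℝ³`. -/
def inradius (K : Set (EuclideanSpace ℝ (Fin 3))) : ℝ :=
  sSup {r : ℝ | 0 ≤ r ∧ ∃ a : EuclideanSpace ℝ (Fin 3), closedBall a r ⊆ K}

/-- The circumradius of `K ⊆ ℝ³`. -/
def circumradius (K : Set (EuclideanSpace ℝ (Fin 3))) : ℝ :=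
  sInf {r : ℝ | 0 ≤ r ∧ ∃ a : EuclideanSpace ℝ (Fin 3), K ⊆ closedBall a r}

open Topology Finset Module

theorem Finset.sum_sum_mul_norm_sub_sq_le {E : Type*} [SeminormedAddCommGroup E] {A : Finset E}
    {w : E → ℝ} (hw₀ : ∀ y ∈ A, 0 ≤ w y) (hw : ∑ y ∈ A, w y = 1)
    (hA : ∀ y ∈ A, ∀ z ∈ A, dist y z ≤ 1) :
    ∑ y ∈ A, ∑ z ∈ A, w y * w z * ‖y - z‖ ^ 2 ≤ 1 - ∑ y ∈ A, w y ^ 2 := by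
  classical
  have hterm : ∀ y ∈ A, ∀ z ∈ A,
      w y * w z * ‖y - z‖ ^ 2 ≤ w y * w z - if y = z then w y * w z else 0 := by
    intro y hy z hz
    split_ifs with h
    · simp [h]
    · have hyz : ‖y - z‖ ^ 2 ≤ 1 := by
        rw [← dist_eq_norm]; exact pow_le_one₀ dist_nonneg (hA y hy z hz)
      nlinarith [mul_nonneg (hw₀ y hy) (hw₀ z hz)]
  have hrow : ∀ y ∈ A, ∑ z ∈ A, (w y * w z - if y = z then w y * w z else 0) = w y - w y ^ 2 :=
    fun y hy => by rw [sum_sub_distrib, ← mul_sum, hw, sum_ite_eq, if_pos hy]; ring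
  calc ∑ y ∈ A, ∑ z ∈ A, w y * w z * ‖y - z‖ ^ 2
      ≤ ∑ y ∈ A, ∑ z ∈ A, (w y * w z - if y = z then w y * w z else 0) :=
        sum_le_sum fun y hy => sum_le_sum fun z hz => hterm y hy z hz
    _ = 1 - ∑ y ∈ A, w y ^ 2 := by rw [sum_congr rfl hrow, sum_sub_distrib, hw]

section InnerProductSpace

variable {E : Type*} [NormedAddCommGroup E] [InnerProductSpace ℝ E]

theorem Finset.sum_sum_mul_norm_sub_sq {A : Finset E} {w : E → ℝ} (hw : ∑ y ∈ A, w y = 1)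
    {c : E} (hc : ∑ y ∈ A, w y • y = c) :
    ∑ y ∈ A, ∑ z ∈ A, w y * w z * ‖y - z‖ ^ 2 = 2 * ∑ y ∈ A, w y * ‖y - c‖ ^ 2 := by
  have hbar : ∑ y ∈ A, w y • (y - c) = 0 := by
    simp only [smul_sub, sum_sub_distrib, ← sum_smul, hw, hc, one_smul, sub_self]
  have hcross : ∑ y ∈ A, ∑ z ∈ A, w y * w z * ⟪y - c, z - c⟫ = 0 := by
    have h := congrArg (fun v => ⟪v, v⟫) hbar
    simp only [sum_inner, inner_sum, real_inner_smul_left, real_inner_smul_right, inner_zero_left]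
      at h
    rw [← h]
    exact sum_congr rfl fun _ _ => sum_congr rfl fun _ _ => by rw [real_inner_comm]; ring
  have hsplit : ∀ y z : E, ‖y - z‖ ^ 2 = ‖y - c‖ ^ 2 + ‖z - c‖ ^ 2 - 2 * ⟪y - c, z - c⟫ := by
    intro y z
    have h := norm_sub_sq_real (y - c) (z - c)
    rw [sub_sub_sub_cancel_right] at h
    linarith
  have hleft : ∑ y ∈ A, ∑ z ∈ A, w y * w z * ‖y - c‖ ^ 2 = ∑ y ∈ A, w y * ‖y - c‖ ^ 2 :=
    sum_congr rfl fun y _ => by rw [← sum_mul, ← mul_sum, hw, mul_one]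
  have hright : ∑ y ∈ A, ∑ z ∈ A, w y * w z * ‖z - c‖ ^ 2 = ∑ z ∈ A, w z * ‖z - c‖ ^ 2 := by
    rw [sum_comm]
    exact sum_congr rfl fun z _ => by rw [← sum_mul, ← sum_mul, hw, one_mul]
  calc ∑ y ∈ A, ∑ z ∈ A, w y * w z * ‖y - z‖ ^ 2
      = ∑ y ∈ A, ∑ z ∈ A, w y * w z * ‖y - c‖ ^ 2 + ∑ y ∈ A, ∑ z ∈ A, w y * w z * ‖z - c‖ ^ 2
          - 2 * ∑ y ∈ A, ∑ z ∈ A, w y * w z * ⟪y - c, z - c⟫ := by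
        rw [← sum_add_distrib, mul_sum, ← sum_sub_distrib]
        refine sum_congr rfl fun y _ => ?_
        rw [← sum_add_distrib, mul_sum, ← sum_sub_distrib]
        exact sum_congr rfl fun z _ => by rw [hsplit]; ring
    _ = 2 * ∑ y ∈ A, w y * ‖y - c‖ ^ 2 := by rw [hleft, hright, hcross]; ring

theorem Convex.exists_forall_inner_sub_sub_nonpos {C : Set E} (hC : Convex ℝ C)
    (hCc : IsComplete C) (hne : C.Nonempty) (y : E) :
    ∃ p ∈ C, ∀ x ∈ C, ⟪y - p, x - p⟫ ≤ 0 := by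
  obtain ⟨p, hp, hmin⟩ := exists_norm_eq_iInf_of_complete_convex hne hCc hC y
  exact ⟨p, hp, (norm_eq_iInf_iff_real_inner_le_zero hC hp).1 hmin⟩

theorem dist_add_smul_lt {c x u : E} (hu : u ≠ 0) (hux : ‖u‖ ^ 2 ≤ ⟪x - c, u⟫) {t : ℝ}
    (ht₀ : 0 < t) (ht₂ : t < 2) : dist (c + t • u) x < dist c x := by
  have hsq : dist (c + t • u) x ^ 2 = dist c x ^ 2 - 2 * t * ⟪x - c, u⟫ + t ^ 2 * ‖u‖ ^ 2 := by
    rw [dist_eq_norm, dist_eq_norm, norm_sub_rev c x,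
      show c + t • u - x = -((x - c) - t • u) by abel, norm_neg, norm_sub_sq_real,
      real_inner_smul_right, norm_smul, Real.norm_eq_abs, abs_of_pos ht₀]
    ring
  have hu₀ : 0 < ‖u‖ ^ 2 := by positivity
  refine lt_of_pow_lt_pow_left₀ 2 dist_nonneg ?_
  nlinarith [mul_pos ht₀ (mul_pos (sub_pos.2 ht₂) hu₀)]

/-- Take `c` to be the centre of a smallest ball containing `s`: were `c` outside the convex hull
of the points on the boundary sphere, moving it towards that hull would shrink the ball. -/
theorem Finset.exists_mem_convexHull_filter_dist_eq (s : Finset E) (hs : s.Nonempty) :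
    ∃ c R, (∀ x ∈ s, dist c x ≤ R) ∧ c ∈ convexHull ℝ (s.filter (dist c · = R) : Set E) := by
  classical
  set f : E → ℝ := fun c => s.sup' hs (dist c ·)
  have hf : Continuous f := by fun_prop
  obtain ⟨c, hc, hmin⟩ := (s.finite_toSet.isCompact_convexHull (𝕜 := ℝ)).exists_isMinOn
    (coe_nonempty.2 hs).convexHull hf.continuousOn
  have hle : ∀ x ∈ s, dist c x ≤ f c := fun x hx => s.le_sup' (dist c ·) hx
  refine ⟨c, f c, hle, ?_⟩
  set A := s.filter (dist c · = f c)
  have hAne : A.Nonempty := by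
    obtain ⟨x, hx, hxe⟩ := s.exists_mem_eq_sup' hs (dist c ·)
    exact ⟨x, mem_filter.2 ⟨hx, hxe.symm⟩⟩
  by_contra hcA
  obtain ⟨p, hpA, hp⟩ := (convex_convexHull ℝ (A : Set E)).exists_forall_inner_sub_sub_nonpos
    (A.finite_toSet.isCompact_convexHull (𝕜 := ℝ)).isComplete (coe_nonempty.2 hAne).convexHull c
  set u := p - c
  have hu : u ≠ 0 := sub_ne_zero.2 fun h => hcA (h ▸ hpA)
  have hA : ∀ x ∈ A, ‖u‖ ^ 2 ≤ ⟪x - c, u⟫ := by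
    intro x hx
    have h := hp x (subset_convexHull ℝ _ hx)
    rw [← real_inner_self_eq_norm_sq]
    simp only [u, inner_sub_left, inner_sub_right, real_inner_comm] at h ⊢
    linarith
  have hdesc : ∀ x ∈ s, ∀ᶠ t in 𝓝[>] (0 : ℝ), dist (c + t • u) x < f c := by
    intro x hx
    by_cases hxA : dist c x = f c
    · filter_upwards [Ioo_mem_nhdsGT two_pos] with t ht
      exact hxA ▸ dist_add_smul_lt hu (hA x (mem_filter.2 ⟨hx, hxA⟩)) ht.1 ht.2
    · have hcont : Continuous fun t : ℝ => dist (c + t • u) x := by fun_prop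
      exact tendsto_nhdsWithin_of_tendsto_nhds (by simpa using hcont.tendsto 0)
        |>.eventually_lt_const ((hle x hx).lt_of_ne hxA)
  obtain ⟨t, hts, ht₀, ht₁⟩ :=
    ((eventually_all_finset s).2 hdesc |>.and (Ioo_mem_nhdsGT one_pos)).exists
  have hmem : c + t • u ∈ convexHull ℝ (s : Set E) := by
    rw [show c + t • u = (1 - t) • c + t • p by simp only [u, smul_sub]; module]
    exact convex_convexHull ℝ _ hc (convexHull_mono (coe_subset.2 (s.filter_subset _)) hpA)
      (by linarith) ht₀.le (by ring)
  exact (hmin hmem).not_gt ((sup'_lt_iff hs).2 hts)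

theorem sq_le_of_mem_convexHull_of_dist_eq {A : Finset E}
    (hA : ∀ y ∈ A, ∀ z ∈ A, dist y z ≤ 1) {c : E} (hc : c ∈ convexHull ℝ (A : Set E)) {R : ℝ}
    (hR : ∀ y ∈ A, dist c y = R) : R ^ 2 ≤ (1 - 1 / #A) / 2 := by
  obtain ⟨w, hw₀, hw, hwc⟩ := mem_convexHull'.1 hc
  have hAne : A.Nonempty := nonempty_of_sum_ne_zero (hw ▸ one_ne_zero)
  have hvar : ∑ y ∈ A, w y * ‖y - c‖ ^ 2 = R ^ 2 := by
    simp only [← dist_eq_norm, dist_comm _ c]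
    rw [sum_congr rfl fun y hy => by rw [hR y hy], ← sum_mul, hw, one_mul]
  have hcs : 1 / (#A : ℝ) ≤ ∑ y ∈ A, w y ^ 2 := by
    have h := sq_sum_le_card_mul_sum_sq (s := A) (f := w)
    rw [hw, one_pow] at h
    rwa [div_le_iff₀ (by exact_mod_cast hAne.card_pos), mul_comm]
  have := A.sum_sum_mul_norm_sub_sq hw hwc
  have := A.sum_sum_mul_norm_sub_sq_le hw₀ hw hA
  linarith

theorem Finset.exists_dist_le_sqrt_of_card_le (s : Finset E) {n : ℕ} (hcard : #s ≤ n + 1)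
    (hs : ∀ x ∈ s, ∀ y ∈ s, dist x y ≤ 1) :
    ∃ c, ∀ x ∈ s, dist c x ≤ √(n / (2 * (n + 1))) := by
  rcases s.eq_empty_or_nonempty with rfl | hne
  · exact ⟨0, by simp⟩
  obtain ⟨c, R, hle, hc⟩ := s.exists_mem_convexHull_filter_dist_eq hne
  set A := s.filter (dist c · = R)
  have hAne : A.Nonempty := nonempty_iff_ne_empty.2 fun h => by simp [h] at hc
  have hR := sq_le_of_mem_convexHull_of_dist_eq
    (fun y hy z hz => hs y (filter_subset _ s hy) z (filter_subset _ s hz)) hc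
    (fun y hy => (mem_filter.1 hy).2)
  have hAcard : (#A : ℝ) ≤ n + 1 := by
    exact_mod_cast (card_le_card (filter_subset _ s)).trans hcard
  have hinv : 1 / ((n : ℝ) + 1) ≤ 1 / #A :=
    one_div_le_one_div_of_le (by exact_mod_cast hAne.card_pos) hAcard
  have hR₀ : 0 ≤ R := dist_nonneg.trans (hle _ hne.choose_spec)
  refine ⟨c, fun x hx => (hle x hx).trans ((Real.le_sqrt hR₀ (by positivity)).2 ?_)⟩
  calc R ^ 2 ≤ (1 - 1 / #A) / 2 := hR
    _ ≤ (1 - 1 / ((n : ℝ) + 1)) / 2 := by linarith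
    _ = n / (2 * (n + 1)) := by field_simp; ring

theorem jung_theorem [FiniteDimensional ℝ E] (K : Set E) (hK : ∀ x ∈ K, ∀ y ∈ K, dist x y ≤ 1) :
    ∃ a, K ⊆ closedBall a √(finrank ℝ E / (2 * (finrank ℝ E + 1))) := by
  set ρ := √(finrank ℝ E / (2 * (finrank ℝ E + 1)))
  have hfin : ∀ I : Finset K, #I ≤ finrank ℝ E + 1 →
      (⋂ x ∈ I, closedBall (x : E) ρ).Nonempty := by
    intro I hI
    obtain ⟨c, hc⟩ := (I.map (Function.Embedding.subtype _)).exists_dist_le_sqrt_of_card_le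
      (by rwa [card_map]) (by simpa using fun x hx _ y hy _ => hK x hx y hy)
    exact ⟨c, Set.mem_iInter₂.2 fun x hx => hc x (mem_map_of_mem _ hx)⟩
  obtain ⟨a, ha⟩ := Convex.helly_theorem_compact' (fun _ => convex_closedBall _ _)
    (fun _ => isCompact_closedBall _ _) hfin
  exact ⟨a, fun x hx => mem_closedBall_comm.1 (Set.mem_iInter.1 ha ⟨x, hx⟩)⟩

end InnerProductSpace

local notation "ℝ³" => EuclideanSpace ℝ (Fin 3)

theorem le_suppFn {K : Set ℝ³} (hK : IsCompact K) {x : ℝ³} (hx : x ∈ K) (u : ℝ³) :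
    ⟪x, u⟫ ≤ suppFn K u :=
  le_csSup (hK.image (by fun_prop)).bddAbove ⟨x, hx, rfl⟩

theorem suppFn_le {K : Set ℝ³} (hne : K.Nonempty) {u : ℝ³} {c : ℝ}
    (h : ∀ x ∈ K, ⟪x, u⟫ ≤ c) : suppFn K u ≤ c :=
  csSup_le (hne.image _) (by rintro _ ⟨x, hx, rfl⟩; exact h x hx)

theorem suppFn_le_of_subset_closedBall {K : Set ℝ³} (hne : K.Nonempty) {a : ℝ³} {r : ℝ}
    (hK : K ⊆ closedBall a r) (u : ℝ³) : suppFn K u ≤ ⟪a, u⟫ + r * ‖u‖ :=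
  suppFn_le hne fun x hx => by
    have hxa : ‖x - a‖ ≤ r := mem_closedBall_iff_norm.1 (hK hx)
    have hcs := real_inner_le_norm (x - a) u
    rw [inner_sub_left] at hcs
    nlinarith [norm_nonneg u]

namespace IsBodyOfConstantWidthOne

theorem dist_le_one {K : Set ℝ³} (hK : IsBodyOfConstantWidthOne K) :
    ∀ x ∈ K, ∀ y ∈ K, dist x y ≤ 1 := by
  obtain ⟨-, hcpt, -, hw⟩ := hK
  intro x hx y hy
  have hsq : ‖x - y‖ ^ 2 ≤ ‖x - y‖ := by
    calc ‖x - y‖ ^ 2 = ⟪x, x - y⟫ + ⟪y, -(x - y)⟫ := by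
          rw [inner_neg_right, ← sub_eq_add_neg, ← inner_sub_left, real_inner_self_eq_norm_sq]
      _ ≤ suppFn K (x - y) + suppFn K (-(x - y)) :=
          add_le_add (le_suppFn hcpt hx _) (le_suppFn hcpt hy _)
      _ = ‖x - y‖ := hw (x - y)
  rw [dist_eq_norm]
  nlinarith [norm_nonneg (x - y)]

/-- A point `y ∉ K` within `1 - R` of `a`, separated from `K` along `u = y - p` with `p` its
nearest point in `K`, would make the width of `K` in direction `u` smaller than `‖u‖`. -/
theorem closedBall_subset {K : Set ℝ³} (hK : IsBodyOfConstantWidthOne K) {a : ℝ³} {R : ℝ}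
    (h : K ⊆ closedBall a R) : closedBall a (1 - R) ⊆ K := by
  obtain ⟨hne, hcpt, hconv, hw⟩ := hK
  intro y hy
  by_contra hyK
  obtain ⟨p, hp, hproj⟩ := hconv.exists_forall_inner_sub_sub_nonpos hcpt.isComplete hne y
  set u := y - p
  have hu : 0 < ‖u‖ := norm_pos_iff.2 (sub_ne_zero.2 fun h => hyK (h ▸ hp))
  have hsep : suppFn K u ≤ ⟪y, u⟫ - ‖u‖ ^ 2 := suppFn_le hne fun x hx => by
    have h := hproj x hx
    rw [← real_inner_self_eq_norm_sq]
    simp only [u, inner_sub_left, inner_sub_right, real_inner_comm] at h ⊢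
    linarith
  have hball := suppFn_le_of_subset_closedBall hne h (-u)
  have hya : ⟪y - a, u⟫ ≤ (1 - R) * ‖u‖ :=
    (real_inner_le_norm _ _).trans
      (mul_le_mul_of_nonneg_right (mem_closedBall_iff_norm.1 hy) hu.le)
  rw [inner_sub_left] at hya
  rw [inner_neg_right, norm_neg] at hball
  nlinarith [hw u]

end IsBodyOfConstantWidthOne

theorem circumradius_le {K : Set ℝ³} {a : ℝ³} {r : ℝ} (h : K ⊆ closedBall a r) (hr : 0 ≤ r) :
    circumradius K ≤ r :=
  csInf_le ⟨0, fun _ hr' => hr'.1⟩ ⟨hr, a, h⟩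

theorem le_inradius {K : Set ℝ³} (hK : ∀ x ∈ K, ∀ y ∈ K, dist x y ≤ 1) {a : ℝ³} {r : ℝ}
    (h : closedBall a r ⊆ K) (hr : 0 ≤ r) : r ≤ inradius K := by
  refine le_csSup ⟨1, ?_⟩ ⟨hr, a, h⟩
  rintro r' ⟨hr', b, hb⟩
  obtain ⟨v, hv⟩ := exists_norm_eq ℝ³ hr'
  have hbv := hK (b + v) (hb (by rw [mem_closedBall, dist_self_add_left, hv]))
    b (hb (mem_closedBall_self hr'))
  rwa [dist_self_add_left, hv] at hbv

theorem circumradius_le_and_inradius_ge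
    (K : Set (EuclideanSpace ℝ (Fin 3))) (hK : IsBodyOfConstantWidthOne K) :
    circumradius K ≤ Real.sqrt (3 / 8) ∧ 1 - Real.sqrt (3 / 8) ≤ inradius K := by
  obtain ⟨a, ha⟩ := jung_theorem K hK.dist_le_one
  rw [finrank_euclideanSpace_fin, show ((3 : ℕ) : ℝ) / (2 * ((3 : ℕ) + 1)) = 3 / 8 by norm_num]
    at ha
  have hsqrt : √(3 / 8) ≤ 1 := Real.sqrt_le_one.2 (by norm_num)
  exact ⟨circumradius_le ha (Real.sqrt_nonneg _),
    le_inradius hK.dist_le_one (hK.closedBall_subset ha) (by linarith)⟩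
end
end

section
/- Let K ⊆ ℝ³ be a body of constant width one whose support function H_K is differentiable at every point of ℝ³ \ {0}. Then for every r > 0 and all u, v ∈ ℝ³ with ‖u‖ ≥ r and ‖v‖ ≥ r, the gradient of H_K satisfies ‖∇H_K(u) − ∇H_K(v)‖ ≤ (1/r)·(1 + π/2)·‖u − v‖. -/
open MeasureTheory Metric Filter
open scoped RealInnerProductSpace

noncomputable section

/-!
Where `H = suppFn K` is differentiable at `u`, its gradient is any `x ∈ K` maximizing `⟪·, u⟫`,
since `H - ⟪x, ·⟫ ≥ 0` vanishes at `u`; such `x` only depend on `u / ‖u‖`. For a body of constant width one and a unit vector `u`, the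
opposite support point is `x - u` and, the diameter being one, `K ⊆ closedBall (x - u) 1`. Writing
this for the support points `x`, `y` of two unit vectors `u`, `v` and adding gives
`‖x - y‖² ≤ ⟪x - y, u - v⟫`, so `‖x - y‖ ≤ ‖u - v‖`. Finally `u ↦ u / ‖u‖` is `2 / r`-Lipschitz
outside the ball of radius `r`, and `2 ≤ 1 + π / 2`.
-/

theorem norm_inv_norm_smul_sub_le {F : Type*} [NormedAddCommGroup F] [NormedSpace ℝ F]
    {u : F} (hu : u ≠ 0) (v : F) :
    ‖‖u‖⁻¹ • u - ‖v‖⁻¹ • v‖ ≤ 2 * ‖u - v‖ / ‖u‖ := by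
  have hu' : 0 < ‖u‖ := norm_pos_iff.2 hu
  have hsplit : ‖u‖⁻¹ • u - ‖v‖⁻¹ • v = ‖u‖⁻¹ • (u - v) + (‖u‖⁻¹ - ‖v‖⁻¹) • v := by module
  have hsecond : ‖(‖u‖⁻¹ - ‖v‖⁻¹) • v‖ ≤ ‖u - v‖ / ‖u‖ := by
    rcases eq_or_ne v 0 with rfl | hv
    · simp only [smul_zero, norm_zero]; positivity
    have hv' : 0 < ‖v‖ := norm_pos_iff.2 hv
    have heq : ‖(‖u‖⁻¹ - ‖v‖⁻¹) • v‖ = |‖v‖ - ‖u‖| / ‖u‖ := by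
      rw [norm_smul, Real.norm_eq_abs, inv_sub_inv hu'.ne' hv'.ne', abs_div,
        abs_of_pos (mul_pos hu' hv')]
      field_simp
    rw [heq, abs_sub_comm]
    gcongr
    exact abs_norm_sub_norm_le u v
  calc ‖‖u‖⁻¹ • u - ‖v‖⁻¹ • v‖
      ≤ ‖‖u‖⁻¹ • (u - v)‖ + ‖(‖u‖⁻¹ - ‖v‖⁻¹) • v‖ := hsplit ▸ norm_add_le _ _
    _ ≤ ‖u - v‖ / ‖u‖ + ‖u - v‖ / ‖u‖ := by
        gcongr
        rw [norm_smul, norm_inv, norm_norm, inv_mul_eq_div]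
    _ = 2 * ‖u - v‖ / ‖u‖ := by ring

theorem gradient_eq_of_inner_le_of_eq {F : Type*} [NormedAddCommGroup F] [InnerProductSpace ℝ F]
    [CompleteSpace F] {f : F → ℝ} {w x : F} (hf : DifferentiableAt ℝ f w)
    (hle : ∀ z, ⟪x, z⟫ ≤ f z) (heq : f w = ⟪x, w⟫) : gradient f w = x := by
  have hℓ : HasFDerivAt (fun z => ⟪x, z⟫) (InnerProductSpace.toDual ℝ F x) w :=
    (InnerProductSpace.toDual ℝ F x).hasFDerivAt
  have hmin : IsLocalMin (fun z => f z - ⟪x, z⟫) w :=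
    Eventually.of_forall fun z => by simpa only [heq, sub_self, sub_nonneg] using hle z
  have hzero : fderiv ℝ f w - InnerProductSpace.toDual ℝ F x = 0 := by
    rw [← (hf.hasFDerivAt.sub hℓ).fderiv]
    exact hmin.fderiv_eq_zero
  rw [gradient, sub_eq_zero.1 hzero, LinearIsometryEquiv.symm_apply_apply]

theorem isMaxOn_inner_smul {F : Type*} [NormedAddCommGroup F] [InnerProductSpace ℝ F]
    {s : Set F} {u x : F} {c : ℝ} (hc : 0 ≤ c) (hmax : IsMaxOn (fun y => ⟪y, u⟫) s x) :
    IsMaxOn (fun y => ⟪y, c • u⟫) s x := fun y hy => by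
  simpa only [Set.mem_ofPred_eq, real_inner_smul_right] using
    mul_le_mul_of_nonneg_left (hmax hy) hc

section

local notation "E³" => EuclideanSpace ℝ (Fin 3)

variable {K : Set E³}

theorem inner_le_suppFn (hK : IsCompact K) {x : E³} (hx : x ∈ K) (u : E³) :
    ⟪x, u⟫ ≤ suppFn K u :=
  le_csSup (hK.image (continuous_id.inner continuous_const)).bddAbove (Set.mem_image_of_mem _ hx)

theorem suppFn_eq_inner_of_isMaxOn {x u : E³} (hx : x ∈ K)
    (hmax : IsMaxOn (fun y => ⟪y, u⟫) K x) : suppFn K u = ⟪x, u⟫ :=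
  IsGreatest.csSup_eq ⟨Set.mem_image_of_mem _ hx, Set.forall_mem_image.2 fun _ hy => hmax hy⟩

theorem gradient_suppFn_eq_of_isMaxOn (hK : IsCompact K) {x u : E³} (hx : x ∈ K)
    (hmax : IsMaxOn (fun y => ⟪y, u⟫) K x) (hdiff : DifferentiableAt ℝ (suppFn K) u) :
    gradient (suppFn K) u = x :=
  gradient_eq_of_inner_le_of_eq hdiff (inner_le_suppFn hK hx)
    (suppFn_eq_inner_of_isMaxOn hx hmax)

namespace IsBodyOfConstantWidthOne

theorem exists_isMaxOn_inner (hK : IsBodyOfConstantWidthOne K) (u : E³) :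
    ∃ x ∈ K, IsMaxOn (fun y => ⟪y, u⟫) K x :=
  hK.2.1.exists_isMaxOn hK.1 (continuous_id.inner continuous_const).continuousOn

theorem norm_sub_le_one (hK : IsBodyOfConstantWidthOne K) {p q : E³} (hp : p ∈ K)
    (hq : q ∈ K) : ‖p - q‖ ≤ 1 := by
  have hwidth : ⟪p, p - q⟫ + ⟪q, -(p - q)⟫ ≤ ‖p - q‖ :=
    hK.2.2.2 (p - q) ▸ add_le_add (inner_le_suppFn hK.2.1 hp _) (inner_le_suppFn hK.2.1 hq _)
  have hsq : ⟪p, p - q⟫ + ⟪q, -(p - q)⟫ = ‖p - q‖ ^ 2 := by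
    rw [inner_neg_right, ← sub_eq_add_neg, ← inner_sub_left, real_inner_self_eq_norm_sq]
  nlinarith [norm_nonneg (p - q)]

theorem sub_eq_of_isMaxOn (hK : IsBodyOfConstantWidthOne K) {u p q : E³} (hu : ‖u‖ = 1)
    (hp : p ∈ K) (hq : q ∈ K) (hpmax : IsMaxOn (fun y => ⟪y, u⟫) K p)
    (hqmax : IsMaxOn (fun y => ⟪y, -u⟫) K q) : p - q = u := by
  have hinner : ⟪p - q, u⟫ = 1 := by
    have hwidth := hK.2.2.2 u
    rw [suppFn_eq_inner_of_isMaxOn hp hpmax, suppFn_eq_inner_of_isMaxOn hq hqmax,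
      inner_neg_right, hu] at hwidth
    rw [inner_sub_left]
    linarith
  have hsq : ‖(p - q) - u‖ ^ 2 ≤ 0 := by
    rw [norm_sub_sq_real, hinner, hu]
    nlinarith [norm_nonneg (p - q), hK.norm_sub_le_one hp hq]
  rw [← sub_eq_zero, ← norm_eq_zero]
  nlinarith [norm_nonneg ((p - q) - u)]

theorem subset_closedBall_of_isMaxOn (hK : IsBodyOfConstantWidthOne K) {u x : E³}
    (hu : ‖u‖ = 1) (hx : x ∈ K) (hmax : IsMaxOn (fun y => ⟪y, u⟫) K x) :
    K ⊆ closedBall (x - u) 1 := by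
  obtain ⟨q, hq, hqmax⟩ := hK.exists_isMaxOn_inner (-u)
  have hxq : x - u = q := by rw [← hK.sub_eq_of_isMaxOn hu hx hq hmax hqmax, sub_sub_cancel]
  intro y hy
  rw [mem_closedBall, dist_eq_norm, hxq]
  exact hK.norm_sub_le_one hy hq

theorem sq_norm_sub_le_of_isMaxOn (hK : IsBodyOfConstantWidthOne K) {u x y : E³}
    (hu : ‖u‖ = 1) (hx : x ∈ K) (hmax : IsMaxOn (fun y => ⟪y, u⟫) K x) (hy : y ∈ K) :
    ‖x - y‖ ^ 2 ≤ 2 * ⟪x - y, u⟫ := by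
  have hball : ‖(y - x) + u‖ ≤ 1 := by
    have := hK.subset_closedBall_of_isMaxOn hu hx hmax hy
    rwa [mem_closedBall, dist_eq_norm, sub_sub_eq_add_sub, add_sub_right_comm] at this
  have hexpand : ‖(y - x) + u‖ ^ 2 = ‖x - y‖ ^ 2 - 2 * ⟪x - y, u⟫ + 1 := by
    rw [norm_add_sq_real, norm_sub_rev y x, ← neg_sub x y, inner_neg_left, hu]
    ring
  nlinarith [norm_nonneg ((y - x) + u)]

theorem norm_sub_le_of_isMaxOn (hK : IsBodyOfConstantWidthOne K) {u v x y : E³}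
    (hu : ‖u‖ = 1) (hv : ‖v‖ = 1) (hx : x ∈ K) (hy : y ∈ K)
    (hxmax : IsMaxOn (fun z => ⟪z, u⟫) K x) (hymax : IsMaxOn (fun z => ⟪z, v⟫) K y) :
    ‖x - y‖ ≤ ‖u - v‖ := by
  have hxy := hK.sq_norm_sub_le_of_isMaxOn hu hx hxmax hy
  have hyx := hK.sq_norm_sub_le_of_isMaxOn hv hy hymax hx
  rw [norm_sub_rev, ← neg_sub x y, inner_neg_left] at hyx
  have hmono : ‖x - y‖ ^ 2 ≤ ‖x - y‖ * ‖u - v‖ := by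
    have := real_inner_le_norm (x - y) (u - v)
    rw [inner_sub_right] at this
    linarith
  nlinarith [norm_nonneg (x - y), norm_nonneg (u - v)]

theorem norm_gradient_suppFn_sub_le (hK : IsBodyOfConstantWidthOne K) {u v : E³} (hu : u ≠ 0)
    (hv : v ≠ 0) (hdu : DifferentiableAt ℝ (suppFn K) u)
    (hdv : DifferentiableAt ℝ (suppFn K) v) :
    ‖gradient (suppFn K) u - gradient (suppFn K) v‖ ≤ ‖‖u‖⁻¹ • u - ‖v‖⁻¹ • v‖ := by
  obtain ⟨x, hx, hxmax⟩ := hK.exists_isMaxOn_inner u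
  obtain ⟨y, hy, hymax⟩ := hK.exists_isMaxOn_inner v
  rw [gradient_suppFn_eq_of_isMaxOn hK.2.1 hx hxmax hdu,
    gradient_suppFn_eq_of_isMaxOn hK.2.1 hy hymax hdv]
  exact hK.norm_sub_le_of_isMaxOn (norm_smul_inv_norm hu) (norm_smul_inv_norm hv) hx hy
    (isMaxOn_inner_smul (by positivity) hxmax) (isMaxOn_inner_smul (by positivity) hymax)

end IsBodyOfConstantWidthOne

end

theorem gradient_suppFn_lipschitz
    (K : Set (EuclideanSpace ℝ (Fin 3))) (hK : IsBodyOfConstantWidthOne K)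
    (hdiff : ∀ u : EuclideanSpace ℝ (Fin 3), u ≠ 0 → DifferentiableAt ℝ (suppFn K) u)
    (r : ℝ) (hr : 0 < r) (u v : EuclideanSpace ℝ (Fin 3))
    (hu : r ≤ ‖u‖) (hv : r ≤ ‖v‖) :
    ‖gradient (suppFn K) u - gradient (suppFn K) v‖ ≤
      (1 / r) * (1 + Real.pi / 2) * ‖u - v‖ := by
  have hu0 : u ≠ 0 := norm_pos_iff.1 (hr.trans_le hu)
  have hv0 : v ≠ 0 := norm_pos_iff.1 (hr.trans_le hv)
  have hpi : (2 : ℝ) ≤ 1 + Real.pi / 2 := by linarith [Real.pi_gt_three]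
  calc ‖gradient (suppFn K) u - gradient (suppFn K) v‖
      ≤ ‖‖u‖⁻¹ • u - ‖v‖⁻¹ • v‖ :=
        hK.norm_gradient_suppFn_sub_le hu0 hv0 (hdiff u hu0) (hdiff v hv0)
    _ ≤ 2 * ‖u - v‖ / ‖u‖ := norm_inv_norm_smul_sub_le hu0 v
    _ ≤ 2 * ‖u - v‖ / r := by gcongr
    _ = (1 / r) * 2 * ‖u - v‖ := by ring
    _ ≤ (1 / r) * (1 + Real.pi / 2) * ‖u - v‖ := by gcongr
end
end
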